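/- arXiv:2204.04566 — 4 statements merged into one kernel-verified Lean document; each statement's English description precedes it below -/
import Mathlib

section
/- Let $P, Q \in \mathbb{C}^n$ and let $Y = S_n\langle P, Q\rangle$ be the union of the $S_n$-orbits of $P$ and $Q$. Then $T(S_n\langle Q\rangle) \cdot (x_1 + \dots + x_n) \subseteq T(Y)$, i.e., the product of the ideal $T(S_n\langle Q\rangle)$ with the principal ideal generated by $x_1 + \dots + x_n$ is contained in $T(Y)$. -/
/-!
If `f` vanishes on `S_n⟨Q⟩` and `c = P₁ + ⋯ + Pₙ`, then `f · (x₁ + ⋯ + xₙ - c)` vanishes on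
`S_n⟨P⟩ ∪ S_n⟨Q⟩`, because `x₁ + ⋯ + xₙ` is symmetric and hence takes the value `c` on the whole
orbit of `P`. Over a domain top components are multiplicative, so the top component of this product
is `top(f) · (x₁ + ⋯ + xₙ)`.
-/

open MvPolynomial

noncomputable section

/-- The top degree component of a polynomial. -/
def topComponent {n : ℕ} (f : MvPolynomial (Fin n) ℂ) : MvPolynomial (Fin n) ℂ :=
  homogeneousComponent f.totalDegree f

/-- The top degree (associated graded) ideal `T(Y)` of a set `Y ⊆ ℂⁿ`. -/
def topIdeal {n : ℕ} (Y : Set (Fin n → ℂ)) : Ideal (MvPolynomial (Fin n) ℂ) :=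
  Ideal.span {g | ∃ f ∈ vanishingIdeal ℂ Y, f ≠ 0 ∧ topComponent f = g}

/-- The orbit of a point of `ℂⁿ` under the symmetric group permuting coordinates. -/
def permOrbit {n : ℕ} (P : Fin n → ℂ) : Set (Fin n → ℂ) :=
  {R | ∃ σ : Equiv.Perm (Fin n), R = P ∘ σ}

namespace MvPolynomial

variable {σ R : Type*}

theorem homogeneousComponent_add_mul_of_totalDegree_le [CommSemiring R] {f g : MvPolynomial σ R}
    {a b : ℕ} (hf : f.totalDegree ≤ a) (hg : g.totalDegree ≤ b) :
    homogeneousComponent (a + b) (f * g) =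
      homogeneousComponent a f * homogeneousComponent b g := by
  classical
  ext d
  rw [coeff_homogeneousComponent]
  split_ifs with hd
  · rw [coeff_mul, coeff_mul]
    refine Finset.sum_congr rfl fun x hx => ?_
    rw [Finset.HasAntidiagonal.mem_antidiagonal] at hx
    have hdeg : x.1.degree + x.2.degree = a + b := by rw [← map_add, hx, hd]
    simp only [coeff_homogeneousComponent]
    by_cases h1 : x.1.degree = a
    · rw [if_pos h1, if_pos (by omega)]
    · rw [if_neg h1, zero_mul]
      -- one of the two degrees exceeds its bound, so one of the two coefficients vanishes
      rcases Nat.lt_or_gt_of_ne h1 with h1 | h1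
      · rw [coeff_eq_zero_of_totalDegree_lt (by omega : g.totalDegree < x.2.degree), mul_zero]
      · rw [coeff_eq_zero_of_totalDegree_lt (by omega : f.totalDegree < x.1.degree), zero_mul]
  · exact (((homogeneousComponent_isHomogeneous a f).mul
      (homogeneousComponent_isHomogeneous b g)).coeff_eq_zero hd).symm

theorem homogeneousComponent_totalDegree_mul [CommSemiring R] [NoZeroDivisors R]
    {f g : MvPolynomial σ R} (hf : f ≠ 0) (hg : g ≠ 0) :
    homogeneousComponent (f * g).totalDegree (f * g) =
      homogeneousComponent f.totalDegree f * homogeneousComponent g.totalDegree g := by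
  rw [totalDegree_mul_of_isDomain hf hg]
  exact homogeneousComponent_add_mul_of_totalDegree_le le_rfl le_rfl

theorem IsHomogeneous.homogeneousComponent_sub_C [CommRing R] {g : MvPolynomial σ R} {k : ℕ}
    (hg : g.IsHomogeneous k) (hk : 0 < k) (c : R) :
    homogeneousComponent k (g - C c) = g := by
  rw [map_sub, homogeneousComponent_of_mem hg, if_pos rfl,
    homogeneousComponent_eq_zero _ _ (by rwa [totalDegree_C]), sub_zero]

theorem IsHomogeneous.homogeneousComponent_totalDegree_sub_C [CommRing R]
    {g : MvPolynomial σ R} {k : ℕ} (hg : g.IsHomogeneous k) (hk : 0 < k) (hg0 : g ≠ 0) (c : R) :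
    homogeneousComponent (g - C c).totalDegree (g - C c) = g := by
  suffices (g - C c).totalDegree = k by rw [this, hg.homogeneousComponent_sub_C hk]
  refine le_antisymm ((totalDegree_sub_C_le g c).trans (hg.totalDegree hg0).le) ?_
  by_contra! hlt
  exact hg0 (by rw [← hg.homogeneousComponent_sub_C hk c, homogeneousComponent_eq_zero _ _ hlt])

theorem IsSymmetric.aeval_comp_perm {S : Type*} [CommSemiring R] [CommSemiring S] [Algebra R S]
    {φ : MvPolynomial σ R} (hφ : φ.IsSymmetric) (x : σ → S) (e : Equiv.Perm σ) :
    aeval (x ∘ e) φ = aeval x φ := by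
  rw [← aeval_rename, hφ e]

theorem mul_sub_C_mem_vanishingIdeal_union {k K : Type*} [Field k] [Field K] [Algebra k K]
    {Y Z : Set (σ → K)} {f g : MvPolynomial σ k} {c : k} (hf : f ∈ vanishingIdeal k Y)
    (hg : ∀ z ∈ Z, aeval z g = algebraMap k K c) :
    f * (g - C c) ∈ vanishingIdeal k (Z ∪ Y) := by
  rintro x (hx | hx)
  · simp [hg x hx]
  · simp [hf x hx]

end MvPolynomial

theorem topComponent_mul {n : ℕ} {f g : MvPolynomial (Fin n) ℂ} (hf : f ≠ 0) (hg : g ≠ 0) :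
    topComponent (f * g) = topComponent f * topComponent g :=
  homogeneousComponent_totalDegree_mul hf hg

theorem topComponent_mem_topIdeal {n : ℕ} {Y : Set (Fin n → ℂ)} {f : MvPolynomial (Fin n) ℂ}
    (hf : f ∈ vanishingIdeal ℂ Y) (hf0 : f ≠ 0) : topComponent f ∈ topIdeal Y :=
  Ideal.subset_span ⟨f, hf, hf0, rfl⟩

theorem topComponent_mul_sum_X_mem_topIdeal {n : ℕ} (P Q : Fin n → ℂ)
    {f : MvPolynomial (Fin n) ℂ} (hf : f ∈ vanishingIdeal ℂ (permOrbit Q)) (hf0 : f ≠ 0) :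
    topComponent f * ∑ i, X i ∈ topIdeal (permOrbit P ∪ permOrbit Q) := by
  set S : MvPolynomial (Fin n) ℂ := ∑ i, X i
  by_cases hS : S = 0
  · rw [hS, mul_zero]
    exact Ideal.zero_mem _
  have hS_homog : S.IsHomogeneous 1 := IsHomogeneous.sum _ _ _ fun i _ => isHomogeneous_X ℂ i
  have hS_symm : S.IsSymmetric := by
    simpa only [esymm_one] using esymm_isSymmetric (Fin n) ℂ 1
  set c := aeval P S
  have hvan : f * (S - C c) ∈ vanishingIdeal ℂ (permOrbit P ∪ permOrbit Q) :=
    mul_sub_C_mem_vanishingIdeal_union hf fun _ ⟨e, he⟩ => he ▸ hS_symm.aeval_comp_perm P e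
  have htop : topComponent (S - C c) = S :=
    hS_homog.homogeneousComponent_totalDegree_sub_C one_pos hS c
  have hne : S - C c ≠ 0 := fun h => hS (by rw [← htop, h, topComponent, map_zero])
  rw [← htop, ← topComponent_mul hf0 hne]
  exact topComponent_mem_topIdeal hvan (mul_ne_zero hf0 hne)

/-- Lemma 2.3: `T(S_n⟨Q⟩)·(x₁+⋯+xₙ) ⊆ T(S_n⟨P,Q⟩)`. -/
theorem top_ideal_product {n : ℕ} (P Q : Fin n → ℂ) :
    topIdeal (permOrbit Q) * Ideal.span {∑ i : Fin n, (X i : MvPolynomial (Fin n) ℂ)} ≤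
      topIdeal (permOrbit P ∪ permOrbit Q) := by
  rw [topIdeal, Ideal.span_mul_span', Ideal.span_le]
  rintro _ ⟨_, ⟨f, hf, hf0, rfl⟩, _, rfl, rfl⟩
  exact topComponent_mul_sum_X_mem_topIdeal P Q hf hf0
end
end

section
/- Let $P, Q \in \mathbb{C}^n$, and suppose $T(S_n\langle P\rangle) \subseteq T(S_n\langle Q\rangle)$ (which holds whenever the multiplicity partition $\lambda$ of the coordinates of $P$ is dominated by the multiplicity partition $\mu$ of the coordinates of $Q$) and that the coordinate sums $\Sigma(P) = \sum_i P_i$ and $\Sigma(Q) = \sum_i Q_i$ are distinct. Let $Y = S_n\langle P, Q\rangle$. Then $T(S_n\langle P\rangle) = T(Y) + (x_1 + \dots + x_n)$ as ideals of $\mathbb{C}[x_1,\dots,x_n]$. -/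
open MvPolynomial

noncomputable section

/-!
Write `ℓ = x₁ + ⋯ + xₙ`; it is constant on each orbit, equal to `a = Σ(P)` on `S_n⟨P⟩` and to
`b = Σ(Q)` on `S_n⟨Q⟩`. Since `ℓ - a` vanishes on `S_n⟨P⟩`, `ℓ ∈ T(S_n⟨P⟩)`, and
`T(S_n⟨P, Q⟩) ⊆ T(S_n⟨P⟩)` trivially. Conversely, let `f ∈ I(S_n⟨P⟩)` have degree `d`. As
`top f ∈ T(S_n⟨Q⟩)`, there is `h ∈ I(S_n⟨Q⟩)` of degree at most `d` whose degree-`d` part is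
`top f`. Then `(ℓ - b) f - (ℓ - a) h` vanishes on `S_n⟨P, Q⟩`, has degree at most `d` (its
degree-`(d + 1)` parts cancel), and its degree-`d` part is `(a - b) top f` modulo `ℓ`.
-/

namespace MvPolynomial

variable {σ R : Type*} {i j d : ℕ}

section CommSemiring

variable [CommSemiring R] {p : MvPolynomial σ R}

section GradedAlgebra

attribute [local instance] MvPolynomial.gradedAlgebra

theorem coe_decompose_homogeneousSubmodule (p : MvPolynomial σ R) (i : ℕ) :
    (DirectSum.decompose (homogeneousSubmodule σ R) p i : MvPolynomial σ R) =
      homogeneousComponent i p :=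
  decomposition.decompose'_apply p i

theorem IsHomogeneous.homogeneousComponent_add_mul (hp : p.IsHomogeneous i) (q : MvPolynomial σ R)
    (j : ℕ) : homogeneousComponent (i + j) (p * q) = p * homogeneousComponent j q := by
  simpa only [coe_decompose_homogeneousSubmodule] using
    DirectSum.coe_decompose_mul_add_of_left_mem (homogeneousSubmodule σ R) (j := j) (b := q)
      ((mem_homogeneousSubmodule _ _).mpr hp)

theorem IsHomogeneous.homogeneousComponent_mul_of_lt (hp : p.IsHomogeneous i)
    (q : MvPolynomial σ R) (hj : j < i) : homogeneousComponent j (p * q) = 0 := by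
  simpa only [coe_decompose_homogeneousSubmodule] using
    DirectSum.coe_decompose_mul_of_left_mem_of_not_le (homogeneousSubmodule σ R) (b := q)
      ((mem_homogeneousSubmodule _ _).mpr hp) hj.not_ge

end GradedAlgebra

theorem totalDegree_le_of_homogeneousComponent_eq_zero
    (h : ∀ e, d < e → homogeneousComponent e p = 0) : p.totalDegree ≤ d := by
  refine Finset.sup_le fun m hm => le_of_not_gt fun hlt => mem_support_iff.mp hm ?_
  have := congr_arg (coeff m) (h _ hlt)
  rwa [coeff_homogeneousComponent, if_pos (by rfl), coeff_zero] at this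

theorem exists_totalDegree_mul_le_homogeneousComponent_mul_eq (c w : MvPolynomial σ R) (d : ℕ) :
    ∃ c', (c' * w).totalDegree ≤ d ∧ homogeneousComponent d (c' * w) =
      homogeneousComponent d (c * homogeneousComponent w.totalDegree w) := by
  have htop := homogeneousComponent_isHomogeneous w.totalDegree w
  by_cases hd : w.totalDegree ≤ d
  · obtain ⟨k, rfl⟩ := Nat.exists_eq_add_of_le hd
    have hc := homogeneousComponent_isHomogeneous k c
    refine ⟨homogeneousComponent k c,
      (totalDegree_mul _ _).trans (by have := hc.totalDegree_le; omega), ?_⟩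
    rw [add_comm, hc.homogeneousComponent_add_mul, mul_comm c, add_comm,
      htop.homogeneousComponent_add_mul, mul_comm]
  · refine ⟨0, by simp, ?_⟩
    rw [mul_comm c, htop.homogeneousComponent_mul_of_lt _ (not_le.mp hd), zero_mul, map_zero]

end CommSemiring

theorem totalDegree_mul_sub_le_of_homogeneousComponent_eq [CommRing R]
    {ℓ f h : MvPolynomial σ R} (hℓ : ℓ.IsHomogeneous 1) (hf : f.totalDegree ≤ d)
    (hh : h.totalDegree ≤ d) (hfh : homogeneousComponent d f = homogeneousComponent d h) :
    (ℓ * (f - h)).totalDegree ≤ d := by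
  have hfh' : ∀ e, d ≤ e → homogeneousComponent e (f - h) = 0 := fun e he => by
    obtain rfl | hlt := he.eq_or_lt
    · rw [map_sub, hfh, sub_self]
    · rw [map_sub, homogeneousComponent_eq_zero _ _ (hf.trans_lt hlt),
        homogeneousComponent_eq_zero _ _ (hh.trans_lt hlt), sub_self]
  refine totalDegree_le_of_homogeneousComponent_eq_zero fun e he => ?_
  obtain ⟨e, rfl⟩ := Nat.exists_eq_add_of_lt he
  rw [show d + e + 1 = 1 + (d + e) by omega, hℓ.homogeneousComponent_add_mul, hfh' _ (by omega),
    mul_zero]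

end MvPolynomial

section TopIdeal

attribute [local instance] MvPolynomial.gradedAlgebra

variable {n : ℕ} {Y Z : Set (Fin n → ℂ)} {f : MvPolynomial (Fin n) ℂ} {d : ℕ}

theorem topIdeal_anti (h : Y ⊆ Z) : topIdeal Z ≤ topIdeal Y :=
  Ideal.span_mono fun _ ⟨f, hf, hf0, hg⟩ => ⟨f, vanishingIdeal_anti_mono h hf, hf0, hg⟩

theorem homogeneousComponent_mem_topIdeal (hf : f ∈ vanishingIdeal ℂ Y) (hd : f.totalDegree ≤ d) :
    homogeneousComponent d f ∈ topIdeal Y := by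
  obtain hlt | rfl := hd.lt_or_eq
  · rw [homogeneousComponent_eq_zero _ _ hlt]
    exact zero_mem _
  obtain rfl | hf0 := eq_or_ne f 0
  · rw [map_zero]
    exact zero_mem _
  exact Ideal.subset_span ⟨f, hf, hf0, rfl⟩

theorem exists_mem_vanishingIdeal_homogeneousComponent_eq {t : MvPolynomial (Fin n) ℂ}
    (ht : t ∈ topIdeal Y) (htd : t.IsHomogeneous d) :
    ∃ h ∈ vanishingIdeal ℂ Y, h.totalDegree ≤ d ∧ homogeneousComponent d h = t := by
  obtain ⟨m, c, g, hcg⟩ := Submodule.mem_span_set'.mp ht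
  choose w hwY _ hwg using fun i => (g i).2
  choose c' hc'd hc' using fun i =>
    exists_totalDegree_mul_le_homogeneousComponent_mul_eq (c i) (w i) d
  refine ⟨∑ i, c' i * w i, Ideal.sum_mem _ fun i _ => Ideal.mul_mem_left _ _ (hwY i),
    (totalDegree_finsetSum _ _).trans (Finset.sup_le fun i _ => hc'd i), ?_⟩
  rw [← homogeneousComponent_eq_self htd, ← hcg, map_sum, map_sum]
  exact Finset.sum_congr rfl fun i _ => by rw [hc', ← hwg, smul_eq_mul]; rfl

theorem mem_topIdeal_of_eval_eq {ℓ : MvPolynomial (Fin n) ℂ} {a : ℂ} (hℓ : ℓ.IsHomogeneous d)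
    (hd : d ≠ 0) (hY : ∀ x ∈ Y, eval x ℓ = a) : ℓ ∈ topIdeal Y := by
  have hmem : ℓ - C a ∈ vanishingIdeal ℂ Y := fun x hx => by
    simp [hY x hx]
  have hdeg : (ℓ - C a).totalDegree ≤ d :=
    (totalDegree_sub _ _).trans (max_le hℓ.totalDegree_le (by simp))
  simpa [homogeneousComponent_eq_zero _ (C a) (by simpa [totalDegree_C] using hd.bot_lt),
    homogeneousComponent_eq_self hℓ] using homogeneousComponent_mem_topIdeal hmem hdeg

theorem topComponent_mem_topIdeal_union_sup_span {ℓ : MvPolynomial (Fin n) ℂ} {a b : ℂ}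
    (hℓ : ℓ.IsHomogeneous 1) (hY : ∀ x ∈ Y, eval x ℓ = a) (hZ : ∀ x ∈ Z, eval x ℓ = b)
    (hab : a ≠ b) (hf : f ∈ vanishingIdeal ℂ Y) (hfZ : topComponent f ∈ topIdeal Z) :
    topComponent f ∈ topIdeal (Y ∪ Z) ⊔ Ideal.span {ℓ} := by
  set d := f.totalDegree
  obtain ⟨h, hhZ, hhd, hht⟩ :=
    exists_mem_vanishingIdeal_homogeneousComponent_eq hfZ (homogeneousComponent_isHomogeneous d f)
  -- `g = (ℓ - b) f - (ℓ - a) h`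
  set g := ℓ * (f - h) + C a * h - C b * f
  have hgYZ : g ∈ vanishingIdeal ℂ (Y ∪ Z) := by
    rintro x (hx | hx) <;> change eval x g = 0
    · simp [g, hY x hx, show eval x f = 0 from hf x hx]
    · simp [g, hZ x hx, show eval x h = 0 from hhZ x hx]
  have hgd : g.totalDegree ≤ d := by
    have hℓu : (ℓ * (f - h)).totalDegree ≤ d :=
      totalDegree_mul_sub_le_of_homogeneousComponent_eq hℓ le_rfl hhd hht.symm
    refine (totalDegree_sub _ _).trans (max_le ((totalDegree_add _ _).trans (max_le hℓu ?_)) ?_)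
    · rw [C_mul']
      exact (totalDegree_smul_le a h).trans hhd
    · rw [C_mul']
      exact totalDegree_smul_le b f
  have hℓud : homogeneousComponent d (ℓ * (f - h)) ∈ Ideal.span {ℓ} := by
    have hspan : (Ideal.span {ℓ}).IsHomogeneous (homogeneousSubmodule (Fin n) ℂ) :=
      Ideal.homogeneous_span _ _ fun _ hx => ⟨1, (Set.mem_singleton_iff.mp hx).symm ▸ hℓ⟩
    exact homogeneousComponent_mem_of_mem hspan
      (Ideal.mul_mem_right _ _ (Ideal.mem_span_singleton_self ℓ)) d
  have key : C (a - b) * topComponent f =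
      homogeneousComponent d g - homogeneousComponent d (ℓ * (f - h)) := by
    simp only [g, map_sub, map_add, homogeneousComponent_C_mul, hht]
    rw [topComponent]
    ring
  have hmem : C (a - b) * topComponent f ∈ topIdeal (Y ∪ Z) ⊔ Ideal.span {ℓ} := by
    rw [key]
    exact sub_mem (Ideal.mem_sup_left (homogeneousComponent_mem_topIdeal hgYZ hgd))
      (Ideal.mem_sup_right hℓud)
  have hunit : C (a - b)⁻¹ * C (a - b) = (1 : MvPolynomial (Fin n) ℂ) := by
    rw [← C_mul, inv_mul_cancel₀ (sub_ne_zero.mpr hab), C_1]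
  simpa only [← mul_assoc, hunit, one_mul] using Ideal.mul_mem_left _ (C (a - b)⁻¹) hmem

theorem eval_sum_X_of_mem_permOrbit {P x : Fin n → ℂ} (hx : x ∈ permOrbit P) :
    eval x (∑ i, X i) = ∑ i, P i := by
  obtain ⟨σ, rfl⟩ := hx
  simpa using Equiv.sum_comp σ P

end TopIdeal

/-- Lemma 2.4: if `T(S_n⟨P⟩) ⊆ T(S_n⟨Q⟩)` and the coordinate sums of `P` and
`Q` differ, then `T(S_n⟨P⟩) = T(S_n⟨P,Q⟩) + (x₁+⋯+xₙ)`. -/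
theorem top_ideal_equation {n : ℕ} (P Q : Fin n → ℂ)
    (hPQ : topIdeal (permOrbit P) ≤ topIdeal (permOrbit Q))
    (hsum : ∑ i, P i ≠ ∑ i, Q i) :
    topIdeal (permOrbit P) =
      topIdeal (permOrbit P ∪ permOrbit Q) ⊔
        Ideal.span {∑ i : Fin n, (X i : MvPolynomial (Fin n) ℂ)} := by
  have hs : (∑ i : Fin n, (X i : MvPolynomial (Fin n) ℂ)).IsHomogeneous 1 :=
    IsHomogeneous.sum _ _ _ fun i _ => isHomogeneous_X ℂ i
  refine le_antisymm (Ideal.span_le.mpr ?_) (sup_le (topIdeal_anti Set.subset_union_left) ?_)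
  · rintro _ ⟨f, hf, -, rfl⟩
    exact topComponent_mem_topIdeal_union_sup_span hs (fun _ => eval_sum_X_of_mem_permOrbit)
      (fun _ => eval_sum_X_of_mem_permOrbit) hsum hf
      (hPQ (homogeneousComponent_mem_topIdeal hf le_rfl))
  · exact (Ideal.span_singleton_le_iff_mem _).mpr
      (mem_topIdeal_of_eval_eq hs one_ne_zero fun _ => eval_sum_X_of_mem_permOrbit)
end
end

section
/- Let $P, Q \in \mathbb{C}^n$, suppose $T(S_n\langle P\rangle) \subseteq T(S_n\langle Q\rangle)$ and $\Sigma(P) \neq \Sigma(Q)$, and let $Y = S_n\langle P, Q\rangle$. Then for every $d \geq 0$, the dimension over $\mathbb{C}$ of the degree-$d$ graded component of $\mathbb{C}[x_1,\dots,x_n]/T(Y)$ equals the dimension of the degree-$d$ component of $\mathbb{C}[x_1,\dots,x_n]/T(S_n\langle P\rangle)$ plus the dimension of the degree-$(d-1)$ component of $\mathbb{C}[x_1,\dots,x_n]/T(S_n\langle Q\rangle)$. -/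
/-!
Let `h_Z(d)` be the affine Hilbert function of `Z`: the dimension of the space of functions on `Z`
induced by polynomials of degree `≤ d`. The degree-`d` forms in `T(Z)` are exactly the degree-`d`
components of elements of `I(Z)` of degree `≤ d`, so the degree-`d` piece of `ℂ[x]/T(Z)` has
dimension `h_Z(d) - h_Z(d - 1)`.

For `Y = S_n⟨P⟩ ∪ S_n⟨Q⟩`, a polynomial of degree `≤ d + 1` vanishing on `S_n⟨P⟩` agrees on
`S_n⟨Q⟩` with one of degree `≤ d`: its top component lies in `T(S_n⟨P⟩) ⊆ T(S_n⟨Q⟩)`, so it can be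
cancelled modulo `I(S_n⟨Q⟩)`. Conversely, multiplying by the affine form
`(∑ xᵢ - ∑ Pᵢ) / (∑ Qᵢ - ∑ Pᵢ)`, which vanishes on `S_n⟨P⟩` and is `1` on `S_n⟨Q⟩`, lifts every
function on `S_n⟨Q⟩` of degree `≤ d` to one of degree `≤ d + 1` vanishing on `S_n⟨P⟩`. Hence
`h_Y(d + 1) = h_P(d + 1) + h_Q(d)`, and taking differences gives the theorem.
-/

open MvPolynomial

noncomputable section

/-- The degree-`d` graded piece of the quotient `ℂ[x₁,…,xₙ]/I`: the image of the space of
homogeneous polynomials of degree `d` under the quotient map. -/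
def gradedPiece {n : ℕ} (I : Ideal (MvPolynomial (Fin n) ℂ)) (d : ℕ) :
    Submodule ℂ (MvPolynomial (Fin n) ℂ ⧸ I) :=
  (homogeneousSubmodule (Fin n) ℂ d).map (Ideal.Quotient.mkₐ ℂ I).toLinearMap

open Module

namespace Submodule

variable {K M N P : Type*} [Field K] [AddCommGroup M] [Module K M] [AddCommGroup N] [Module K N]
  [AddCommGroup P] [Module K P]

theorem finrank_map_add_finrank_inf_ker (p : Submodule K M) [FiniteDimensional K p]
    (f : M →ₗ[K] N) :
    finrank K (p.map f) + finrank K ↥(p ⊓ LinearMap.ker f) = finrank K p := by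
  have h := (f.domRestrict p).finrank_range_add_finrank_ker
  rw [LinearMap.range_domRestrict, LinearMap.ker_domRestrict] at h
  rwa [← (comapSubtypeEquivOfLe (inf_le_left : p ⊓ LinearMap.ker f ≤ p)).finrank_eq, comap_inf,
    comap_subtype_self, top_inf_eq]

theorem finrank_map_prod (p : Submodule K M) [FiniteDimensional K p] (f : M →ₗ[K] N)
    (g : M →ₗ[K] P) :
    finrank K (p.map (f.prod g)) =
      finrank K (p.map f) + finrank K ((p ⊓ LinearMap.ker f).map g) := by
  have : FiniteDimensional K ↥(p ⊓ LinearMap.ker f) := finiteDimensional_of_le inf_le_left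
  have hfg := finrank_map_add_finrank_inf_ker p (f.prod g)
  have hf := finrank_map_add_finrank_inf_ker p f
  have hg := finrank_map_add_finrank_inf_ker (p ⊓ LinearMap.ker f) g
  rw [LinearMap.ker_prod, ← inf_assoc] at hfg
  omega

end Submodule

namespace MvPolynomial

variable {σ R : Type*} [CommSemiring R]

theorem homogeneousSubmodule_le_restrictTotalDegree (d : ℕ) :
    homogeneousSubmodule σ R d ≤ restrictTotalDegree σ R d := fun _ hf =>
  (mem_restrictTotalDegree _ _ _).mpr ((mem_homogeneousSubmodule _ _).mp hf).totalDegree_le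

theorem restrictTotalDegree_zero : restrictTotalDegree σ R 0 = homogeneousSubmodule σ R 0 := by
  refine le_antisymm (fun f hf => ?_) (homogeneousSubmodule_le_restrictTotalDegree 0)
  rw [mem_restrictTotalDegree, Nat.le_zero] at hf
  exact isHomogeneous_of_totalDegree_zero _ hf

theorem map_homogeneousComponent_restrictTotalDegree (d : ℕ) :
    (restrictTotalDegree σ R d).map (homogeneousComponent d) = homogeneousSubmodule σ R d := by
  refine le_antisymm ?_ fun f hf => ⟨f, homogeneousSubmodule_le_restrictTotalDegree d hf, ?_⟩
  · rintro _ ⟨f, -, rfl⟩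
    exact homogeneousComponent_mem d f
  · exact homogeneousComponent_eq_self hf

theorem restrictTotalDegree_succ_inf_ker_homogeneousComponent (d : ℕ) :
    restrictTotalDegree σ R (d + 1) ⊓ LinearMap.ker (homogeneousComponent (d + 1)) =
      restrictTotalDegree σ R d := by
  ext f
  simp only [Submodule.mem_inf, mem_restrictTotalDegree, LinearMap.mem_ker]
  refine ⟨fun ⟨hle, h0⟩ => ?_,
    fun h => ⟨h.trans d.le_succ, homogeneousComponent_eq_zero _ _ (by omega)⟩⟩
  refine Finset.sup_le fun m hm => ?_
  have hne : m.degree ≠ d + 1 := fun hdeg => mem_support_iff.mp hm <| by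
    simpa [coeff_homogeneousComponent, hdeg] using congr_arg (coeff m) h0
  have : m.degree ≤ d + 1 := (le_totalDegree hm).trans hle
  change m.degree ≤ d
  omega

attribute [local instance] gradedAlgebra in
theorem homogeneousComponent_mul_of_mem_left {a : ℕ} {r : MvPolynomial σ R}
    (hr : r ∈ homogeneousSubmodule σ R a) (d : ℕ) (f : MvPolynomial σ R) :
    homogeneousComponent d (r * f) = if a ≤ d then r * homogeneousComponent (d - a) f else 0 := by
  rw [← decomposition.decompose'_apply, ← decomposition.decompose'_apply]
  exact DirectSum.coe_decompose_mul_of_left_mem _ d hr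

instance [Finite σ] (d : ℕ) : Module.Finite R (homogeneousSubmodule σ R d) :=
  Module.Finite.iff_fg.mpr (homogeneousSubmodule_fg σ R d)

section LeadingForms

variable {R : Type*} [CommRing R]

def leadingForms (I : Ideal (MvPolynomial σ R)) (d : ℕ) : Submodule R (MvPolynomial σ R) :=
  (I.restrictScalars R ⊓ restrictTotalDegree σ R d).map (homogeneousComponent d)

variable {I : Ideal (MvPolynomial σ R)}

theorem mem_leadingForms {d : ℕ} {x : MvPolynomial σ R} :
    x ∈ leadingForms I d ↔ ∃ f ∈ I, f.totalDegree ≤ d ∧ homogeneousComponent d f = x := by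
  simp only [leadingForms, Submodule.mem_map, Submodule.mem_inf, Submodule.restrictScalars_mem,
    mem_restrictTotalDegree, and_assoc]

theorem mul_mem_leadingForms {a b : ℕ} {r x : MvPolynomial σ R}
    (hr : r ∈ homogeneousSubmodule σ R a) (hx : x ∈ leadingForms I b) :
    r * x ∈ leadingForms I (a + b) := by
  obtain ⟨f, hfI, hfb, rfl⟩ := mem_leadingForms.mp hx
  refine mem_leadingForms.mpr ⟨r * f, I.mul_mem_left r hfI, ?_, ?_⟩
  · exact (totalDegree_mul r f).trans <|
      add_le_add ((mem_homogeneousSubmodule _ _).mp hr).totalDegree_le hfb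
  · rw [homogeneousComponent_mul_of_mem_left hr, if_pos (Nat.le_add_right a b),
      Nat.add_sub_cancel_left]

theorem leadingForms_zero (I : Ideal (MvPolynomial σ R)) :
    leadingForms I 0 = I.restrictScalars R ⊓ restrictTotalDegree σ R 0 := by
  ext x
  simp only [leadingForms, Submodule.mem_map, Submodule.mem_inf, Submodule.restrictScalars_mem,
    restrictTotalDegree_zero]
  constructor
  · rintro ⟨f, ⟨hfI, hf⟩, rfl⟩
    rw [homogeneousComponent_eq_self hf]
    exact ⟨hfI, hf⟩
  · rintro ⟨hxI, hx⟩
    exact ⟨x, ⟨hxI, hx⟩, homogeneousComponent_eq_self hx⟩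

theorem exists_sub_mem_restrictTotalDegree_of_homogeneousComponent_mem {d : ℕ}
    {f : MvPolynomial σ R} (hf : f ∈ restrictTotalDegree σ R (d + 1))
    (hlead : homogeneousComponent (d + 1) f ∈ leadingForms I (d + 1)) :
    ∃ f' ∈ I, f - f' ∈ restrictTotalDegree σ R d := by
  obtain ⟨f', hf'I, hf'd, hf'⟩ := mem_leadingForms.mp hlead
  refine ⟨f', hf'I, ?_⟩
  rw [← restrictTotalDegree_succ_inf_ker_homogeneousComponent, Submodule.mem_inf,
    LinearMap.mem_ker, map_sub, hf', sub_self]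
  exact ⟨sub_mem hf ((mem_restrictTotalDegree _ _ _).mpr hf'd), rfl⟩

end LeadingForms

section Field

variable {K : Type*} [Field K]

theorem finrank_restrictTotalDegree_succ [Finite σ] (d : ℕ) :
    finrank K (restrictTotalDegree σ K (d + 1)) =
      finrank K (restrictTotalDegree σ K d) + finrank K (homogeneousSubmodule σ K (d + 1)) := by
  have h := (restrictTotalDegree σ K (d + 1)).finrank_map_add_finrank_inf_ker
    (homogeneousComponent (d + 1))
  rw [map_homogeneousComponent_restrictTotalDegree,
    restrictTotalDegree_succ_inf_ker_homogeneousComponent] at h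
  omega

theorem finrank_leadingForms_succ_add [Finite σ] (I : Ideal (MvPolynomial σ K)) (d : ℕ) :
    finrank K (leadingForms I (d + 1)) +
        finrank K ↥(I.restrictScalars K ⊓ restrictTotalDegree σ K d) =
      finrank K ↥(I.restrictScalars K ⊓ restrictTotalDegree σ K (d + 1)) := by
  have : FiniteDimensional K ↥(I.restrictScalars K ⊓ restrictTotalDegree σ K (d + 1)) :=
    Submodule.finiteDimensional_of_le inf_le_right
  have h := (I.restrictScalars K ⊓ restrictTotalDegree σ K (d + 1)).finrank_map_add_finrank_inf_ker
    (homogeneousComponent (d + 1))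
  rwa [inf_assoc, restrictTotalDegree_succ_inf_ker_homogeneousComponent] at h

def evalOn (Z : Set (σ → K)) : MvPolynomial σ K →ₗ[K] (Z → K) :=
  LinearMap.pi fun z => (aeval (z : σ → K)).toLinearMap

@[simp]
theorem evalOn_apply (Z : Set (σ → K)) (f : MvPolynomial σ K) (z : Z) :
    evalOn Z f z = aeval (z : σ → K) f :=
  rfl

theorem ker_evalOn (Z : Set (σ → K)) :
    LinearMap.ker (evalOn Z) = (vanishingIdeal K Z).restrictScalars K := by
  ext f
  rw [LinearMap.mem_ker, Submodule.restrictScalars_mem, mem_vanishingIdeal_iff, _root_.funext_iff]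
  simp only [evalOn_apply, Pi.zero_apply, Subtype.forall]

theorem vanishingIdeal_union (Z₁ Z₂ : Set (σ → K)) :
    vanishingIdeal K (Z₁ ∪ Z₂) = vanishingIdeal K Z₁ ⊓ vanishingIdeal K Z₂ := by
  ext f
  simp [or_imp, forall_and]

def affineHilbertFn (Z : Set (σ → K)) (d : ℕ) : ℕ :=
  finrank K ((restrictTotalDegree σ K d).map (evalOn Z))

theorem affineHilbertFn_add_finrank_inf [Finite σ] (Z : Set (σ → K)) (d : ℕ) :
    affineHilbertFn Z d +
        finrank K ↥((vanishingIdeal K Z).restrictScalars K ⊓ restrictTotalDegree σ K d) =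
      finrank K (restrictTotalDegree σ K d) := by
  rw [affineHilbertFn, inf_comm, ← ker_evalOn]
  exact Submodule.finrank_map_add_finrank_inf_ker _ _

theorem affineHilbertFn_zero_of_nonempty {Z : Set (σ → K)} (hZ : Z.Nonempty) :
    affineHilbertFn Z 0 = 1 := by
  have hconst : (restrictTotalDegree σ K 0).map (evalOn Z) = K ∙ 1 := by
    ext v
    simp only [Submodule.mem_map, mem_restrictTotalDegree, Nat.le_zero,
      totalDegree_eq_zero_iff_eq_C, Submodule.mem_span_singleton]
    constructor
    · rintro ⟨f, hf, rfl⟩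
      obtain ⟨c, rfl⟩ : ∃ c, f = C c := ⟨_, hf⟩
      exact ⟨c, by ext; simp⟩
    · rintro ⟨c, rfl⟩
      exact ⟨C c, by simp, by ext; simp⟩
  rw [affineHilbertFn, hconst, finrank_span_singleton]
  obtain ⟨z, hz⟩ := hZ
  exact fun h => one_ne_zero (congr_fun h ⟨z, hz⟩)

theorem affineHilbertFn_union [Finite σ] (Z₁ Z₂ : Set (σ → K)) (d : ℕ) :
    affineHilbertFn (Z₁ ∪ Z₂) d =
      finrank K ((restrictTotalDegree σ K d).map ((evalOn Z₁).prod (evalOn Z₂))) := by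
  have h := (restrictTotalDegree σ K d).finrank_map_add_finrank_inf_ker (evalOn (Z₁ ∪ Z₂))
  have h' := (restrictTotalDegree σ K d).finrank_map_add_finrank_inf_ker
    ((evalOn Z₁).prod (evalOn Z₂))
  rw [ker_evalOn, vanishingIdeal_union, Submodule.restrictScalars_inf] at h
  rw [LinearMap.ker_prod, ker_evalOn, ker_evalOn] at h'
  rw [affineHilbertFn]
  omega

theorem map_evalOn_le_map_evalOn_inf_ker {Z₁ Z₂ : Set (σ → K)} {L : MvPolynomial σ K}
    (hL : L ∈ restrictTotalDegree σ K 1) (hL₁ : L ∈ vanishingIdeal K Z₁)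
    (hL₂ : ∀ z ∈ Z₂, aeval z L = 1) (d : ℕ) :
    (restrictTotalDegree σ K d).map (evalOn Z₂) ≤
      (restrictTotalDegree σ K (d + 1) ⊓ LinearMap.ker (evalOn Z₁)).map (evalOn Z₂) := by
  rintro _ ⟨g, hg, rfl⟩
  refine ⟨L * g, ⟨?_, ?_⟩, ?_⟩
  · simp only [SetLike.mem_coe, mem_restrictTotalDegree] at hL hg ⊢
    have := totalDegree_mul L g
    omega
  · rw [ker_evalOn]
    exact Ideal.mul_mem_right g _ hL₁
  · ext z
    simp only [evalOn_apply, map_mul, hL₂ z z.2, one_mul]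

end Field

end MvPolynomial

section TopIdeal

variable {n : ℕ}

theorem homogeneousComponent_mem_leadingForms_of_mem_topIdeal {Z : Set (Fin n → ℂ)}
    {x : MvPolynomial (Fin n) ℂ} (hx : x ∈ topIdeal Z) (d : ℕ) :
    homogeneousComponent d x ∈ leadingForms (vanishingIdeal ℂ Z) d := by
  induction hx using Submodule.span_induction generalizing d with
  | mem g hg =>
    obtain ⟨f, hfI, -, rfl⟩ := hg
    rw [topComponent, homogeneousComponent_of_mem (homogeneousComponent_mem _ f)]
    split_ifs with hd
    · subst hd
      exact mem_leadingForms.mpr ⟨f, hfI, le_rfl, rfl⟩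
    · exact zero_mem _
  | zero => simp
  | add x y _ _ hx hy =>
    rw [map_add]
    exact add_mem (hx d) (hy d)
  | smul r x _ hx =>
    rw [smul_eq_mul, ← sum_homogeneousComponent r, Finset.sum_mul, map_sum]
    refine sum_mem fun a _ => ?_
    rw [homogeneousComponent_mul_of_mem_left (homogeneousComponent_mem a r)]
    split_ifs with had
    · simpa only [Nat.add_sub_cancel' had] using
        mul_mem_leadingForms (homogeneousComponent_mem a r) (hx (d - a))
    · exact zero_mem _

theorem homogeneousSubmodule_inf_topIdeal (Z : Set (Fin n → ℂ)) (d : ℕ) :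
    homogeneousSubmodule (Fin n) ℂ d ⊓ (topIdeal Z).restrictScalars ℂ =
      leadingForms (vanishingIdeal ℂ Z) d := by
  refine le_antisymm (fun x hx => ?_) fun x hx => ?_
  · obtain ⟨hxd, hxT⟩ := hx
    simpa only [homogeneousComponent_eq_self hxd] using
      homogeneousComponent_mem_leadingForms_of_mem_topIdeal hxT d
  obtain ⟨f, hfI, hfd, rfl⟩ := mem_leadingForms.mp hx
  refine ⟨homogeneousComponent_mem d f, ?_⟩
  rcases eq_or_ne (homogeneousComponent d f) 0 with h0 | h0
  · rw [h0]
    exact zero_mem _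
  have hdeg : f.totalDegree = d :=
    le_antisymm hfd (not_lt.mp fun h => h0 (homogeneousComponent_eq_zero _ _ h))
  exact Ideal.subset_span ⟨f, hfI, fun hf => h0 (by simp [hf]), by rw [topComponent, hdeg]⟩

theorem leadingForms_mono_of_topIdeal_le {Z₁ Z₂ : Set (Fin n → ℂ)}
    (hT : topIdeal Z₁ ≤ topIdeal Z₂) (d : ℕ) :
    leadingForms (vanishingIdeal ℂ Z₁) d ≤ leadingForms (vanishingIdeal ℂ Z₂) d := by
  rw [← homogeneousSubmodule_inf_topIdeal, ← homogeneousSubmodule_inf_topIdeal]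
  exact inf_le_inf_left _ hT

theorem finrank_gradedPiece_add_finrank_inf (I : Ideal (MvPolynomial (Fin n) ℂ)) (d : ℕ) :
    finrank ℂ (gradedPiece I d) +
        finrank ℂ ↥(homogeneousSubmodule (Fin n) ℂ d ⊓ I.restrictScalars ℂ) =
      finrank ℂ (homogeneousSubmodule (Fin n) ℂ d) := by
  have hker : LinearMap.ker (Ideal.Quotient.mkₐ ℂ I).toLinearMap = I.restrictScalars ℂ := by
    ext x
    simp [Ideal.Quotient.eq_zero_iff_mem]
  rw [← hker]
  exact Submodule.finrank_map_add_finrank_inf_ker _ _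

theorem finrank_gradedPiece_topIdeal_zero (Z : Set (Fin n → ℂ)) :
    finrank ℂ (gradedPiece (topIdeal Z) 0) = affineHilbertFn Z 0 := by
  have h := finrank_gradedPiece_add_finrank_inf (topIdeal Z) 0
  have h' := affineHilbertFn_add_finrank_inf Z 0
  rw [homogeneousSubmodule_inf_topIdeal, leadingForms_zero, ← restrictTotalDegree_zero] at h
  omega

theorem finrank_gradedPiece_topIdeal_succ_add (Z : Set (Fin n → ℂ)) (d : ℕ) :
    finrank ℂ (gradedPiece (topIdeal Z) (d + 1)) + affineHilbertFn Z d =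
      affineHilbertFn Z (d + 1) := by
  have hgraded := finrank_gradedPiece_add_finrank_inf (topIdeal Z) (d + 1)
  rw [homogeneousSubmodule_inf_topIdeal] at hgraded
  have hV := finrank_restrictTotalDegree_succ (σ := Fin n) (K := ℂ) d
  have hlead := finrank_leadingForms_succ_add (vanishingIdeal ℂ Z) d
  have hZ := affineHilbertFn_add_finrank_inf Z d
  have hZ' := affineHilbertFn_add_finrank_inf Z (d + 1)
  omega

theorem map_evalOn_inf_ker_le_of_topIdeal_le {Z₁ Z₂ : Set (Fin n → ℂ)}
    (hT : topIdeal Z₁ ≤ topIdeal Z₂) (d : ℕ) :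
    (restrictTotalDegree (Fin n) ℂ (d + 1) ⊓ LinearMap.ker (evalOn Z₁)).map (evalOn Z₂) ≤
      (restrictTotalDegree (Fin n) ℂ d).map (evalOn Z₂) := by
  rintro _ ⟨f, ⟨hf, hfZ₁⟩, rfl⟩
  rw [ker_evalOn] at hfZ₁
  have hlead := leadingForms_mono_of_topIdeal_le hT (d + 1) <|
    mem_leadingForms.mpr ⟨f, hfZ₁, (mem_restrictTotalDegree _ _ _).mp hf, rfl⟩
  obtain ⟨f', hf'Z₂, hsub⟩ :=
    exists_sub_mem_restrictTotalDegree_of_homogeneousComponent_mem hf hlead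
  refine ⟨f - f', hsub, ?_⟩
  rw [map_sub, (ker_evalOn Z₂).ge hf'Z₂, sub_zero]

theorem affineHilbertFn_union_succ {Z₁ Z₂ : Set (Fin n → ℂ)} (hT : topIdeal Z₁ ≤ topIdeal Z₂)
    {L : MvPolynomial (Fin n) ℂ} (hL : L ∈ restrictTotalDegree (Fin n) ℂ 1)
    (hL₁ : L ∈ vanishingIdeal ℂ Z₁) (hL₂ : ∀ z ∈ Z₂, aeval z L = 1) (d : ℕ) :
    affineHilbertFn (Z₁ ∪ Z₂) (d + 1) = affineHilbertFn Z₁ (d + 1) + affineHilbertFn Z₂ d := by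
  rw [affineHilbertFn_union, Submodule.finrank_map_prod, affineHilbertFn, affineHilbertFn,
    le_antisymm (map_evalOn_inf_ker_le_of_topIdeal_le hT d)
      (map_evalOn_le_map_evalOn_inf_ker hL hL₁ hL₂ d)]

end TopIdeal

section PermOrbit

variable {n : ℕ}

theorem permOrbit_nonempty (P : Fin n → ℂ) : (permOrbit P).Nonempty :=
  ⟨P, 1, rfl⟩

theorem sum_eq_of_mem_permOrbit {P z : Fin n → ℂ} (hz : z ∈ permOrbit P) :
    ∑ i, z i = ∑ i, P i := by
  obtain ⟨σ, rfl⟩ := hz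
  exact Equiv.sum_comp σ P

theorem exists_affine_separating_permOrbit {P Q : Fin n → ℂ} (h : ∑ i, P i ≠ ∑ i, Q i) :
    ∃ L ∈ restrictTotalDegree (Fin n) ℂ 1,
      L ∈ vanishingIdeal ℂ (permOrbit P) ∧ ∀ z ∈ permOrbit Q, aeval z L = 1 := by
  refine ⟨(∑ i, Q i - ∑ i, P i)⁻¹ • (∑ i, X i - C (∑ i, P i)), ?_, fun z hz => ?_, fun z hz => ?_⟩
  · refine Submodule.smul_mem _ _ (sub_mem (sum_mem fun i _ => ?_) ?_) <;>
      rw [mem_restrictTotalDegree]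
    · rw [totalDegree_X]
    · rw [totalDegree_C]
      exact zero_le_one
  · simp [sum_eq_of_mem_permOrbit hz]
  · simp [sum_eq_of_mem_permOrbit hz, inv_mul_cancel₀ (sub_ne_zero.mpr h.symm)]

end PermOrbit

/-- under the hypotheses of the main theorem, the dimension of the degree-`d`
piece of `ℂ[x]/T(S_n⟨P,Q⟩)` is the dimension of the degree-`d` piece of `ℂ[x]/T(S_n⟨P⟩)` plus
the dimension of the degree-`(d-1)` piece of `ℂ[x]/T(S_n⟨Q⟩)` (which is zero when `d = 0`). -/
theorem graded_dimensions {n : ℕ} (P Q : Fin n → ℂ)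
    (hPQ : topIdeal (permOrbit P) ≤ topIdeal (permOrbit Q))
    (hsum : ∑ i, P i ≠ ∑ i, Q i) :
    (Module.finrank ℂ (gradedPiece (topIdeal (permOrbit P ∪ permOrbit Q)) 0) =
        Module.finrank ℂ (gradedPiece (topIdeal (permOrbit P)) 0)) ∧
      ∀ d : ℕ,
        Module.finrank ℂ (gradedPiece (topIdeal (permOrbit P ∪ permOrbit Q)) (d + 1)) =
          Module.finrank ℂ (gradedPiece (topIdeal (permOrbit P)) (d + 1)) +
            Module.finrank ℂ (gradedPiece (topIdeal (permOrbit Q)) d) := by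
  obtain ⟨L, hL, hLP, hLQ⟩ := exists_affine_separating_permOrbit hsum
  have hunion := affineHilbertFn_union_succ hPQ hL hLP hLQ
  have hY₀ : affineHilbertFn (permOrbit P ∪ permOrbit Q) 0 = 1 :=
    affineHilbertFn_zero_of_nonempty (permOrbit_nonempty P).inl
  have hP₀ := affineHilbertFn_zero_of_nonempty (permOrbit_nonempty P)
  have hQ₀ := affineHilbertFn_zero_of_nonempty (permOrbit_nonempty Q)
  refine ⟨by rw [finrank_gradedPiece_topIdeal_zero, finrank_gradedPiece_topIdeal_zero, hY₀, hP₀],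
    fun d => ?_⟩
  have hY := finrank_gradedPiece_topIdeal_succ_add (permOrbit P ∪ permOrbit Q) d
  have hP := finrank_gradedPiece_topIdeal_succ_add (permOrbit P) d
  have hU := hunion d
  cases d with
  | zero =>
    have hQ := finrank_gradedPiece_topIdeal_zero (permOrbit Q)
    omega
  | succ d =>
    have hQ := finrank_gradedPiece_topIdeal_succ_add (permOrbit Q) d
    have hU' := hunion d
    omega
end
end

section
/- Let $P, Q \in \mathbb{C}^n$, suppose $T(S_n\langle P\rangle) \subseteq T(S_n\langle Q\rangle)$ and $\Sigma(P) \neq \Sigma(Q)$, and let $Y = S_n\langle P, Q\rangle$. Then the sequence of $\mathbb{C}[x_1,\dots,x_n]$-modules $0 \to \mathbb{C}[x_1,\dots,x_n]/T(S_n\langle Q\rangle) \to \mathbb{C}[x_1,\dots,x_n]/T(Y) \to \mathbb{C}[x_1,\dots,x_n]/T(S_n\langle P\rangle) \to 0$ is exact, where the first map is induced by multiplication by $x_1+\dots+x_n$ and the second map is the quotient map induced by the containment $T(Y) + (x_1+\dots+x_n) \supseteq T(Y)$ together with $T(S_n\langle P\rangle) \supseteq T(Y)$. -/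
open MvPolynomial

noncomputable section

/-!
The ideal `T(Z)` is homogeneous, and its degree-`d` part consists of the degree-`d`
components of the polynomials of degree `≤ d` vanishing on `Z`. Put `s = x₁+⋯+xₙ`,
`a = Σ(P)`, `b = Σ(Q)`, so that `s - a` vanishes on `S_n⟨P⟩` and `s - b` on `S_n⟨Q⟩`.

If `s·f_d` is the top component of `K ∈ I(Y)`, then `K - (s - a) f_d` and `K - (s - b) f_d`
lose their top term and vanish on `S_n⟨P⟩` resp. `S_n⟨Q⟩`; their degree-`d` parts therefore
lie in `T(S_n⟨P⟩) ⊆ T(S_n⟨Q⟩)` resp. `T(S_n⟨Q⟩)`, and they differ by `(a - b) f_d`.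
Conversely, if `f_d` is the top component of `h ∈ I(S_n⟨P⟩)` and of `k ∈ I(S_n⟨Q⟩)`,
then `(s - b) h - (s - a) k ∈ I(Y)` has degree `≤ d`, and its degree-`d` part is
`(a - b) f_d` modulo `(s)`. Hence `T(S_n⟨P⟩) = (s) + T(Y)`.
-/

namespace MvPolynomial

variable {σ R : Type*}

section CommSemiring

attribute [local instance] gradedAlgebra

variable [CommSemiring R]

theorem IsHomogeneous.homogeneousComponent_mul_of_le {q : MvPolynomial σ R} {i d : ℕ}
    (hq : q.IsHomogeneous i) (g : MvPolynomial σ R) (h : i ≤ d) :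
    homogeneousComponent d (q * g) = q * homogeneousComponent (d - i) g := by
  have := DirectSum.coe_decompose_mul_of_left_mem_of_le (𝒜 := homogeneousSubmodule σ R)
    (b := g) hq h
  rwa [← decomposition.decompose'_apply, ← decomposition.decompose'_apply]

theorem IsHomogeneous.homogeneousComponent_mul_of_lt_s11 {q : MvPolynomial σ R} {i d : ℕ}
    (hq : q.IsHomogeneous i) (g : MvPolynomial σ R) (h : d < i) :
    homogeneousComponent d (q * g) = 0 := by
  have := DirectSum.coe_decompose_mul_of_left_mem_of_not_le (𝒜 := homogeneousSubmodule σ R)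
    (b := g) hq h.not_ge
  rwa [← decomposition.decompose'_apply]

theorem IsHomogeneous.homogeneousComponent_mul_mem_span_singleton {q : MvPolynomial σ R}
    {i : ℕ} (hq : q.IsHomogeneous i) (g : MvPolynomial σ R) (d : ℕ) :
    homogeneousComponent d (q * g) ∈ Ideal.span {q} := by
  rcases le_or_gt i d with h | h
  · rw [hq.homogeneousComponent_mul_of_le g h]
    exact Ideal.mul_mem_right _ _ (Ideal.mem_span_singleton_self q)
  · rw [hq.homogeneousComponent_mul_of_lt_s11 g h]
    exact zero_mem _

theorem totalDegree_le_of_homogeneousComponent_succ_eq_zero {f : MvPolynomial σ R} {d : ℕ}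
    (hdeg : f.totalDegree ≤ d + 1) (htop : homogeneousComponent (d + 1) f = 0) :
    f.totalDegree ≤ d := by
  refine Finset.sup_le fun m hm => Nat.le_of_lt_succ <|
    ((le_totalDegree hm).trans hdeg).lt_of_ne fun hm' => mem_support_iff.1 hm ?_
  have := congrArg (coeff m) htop
  rwa [coeff_homogeneousComponent, coeff_zero, if_pos (by exact hm')] at this

end CommSemiring

section CommRing

variable [CommRing R]

theorem IsHomogeneous.totalDegree_sub_C_le {ℓ : MvPolynomial σ R} {i : ℕ}
    (hℓ : ℓ.IsHomogeneous i) (c : R) : (ℓ - C c).totalDegree ≤ i :=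
  (totalDegree_sub _ _).trans (max_le hℓ.totalDegree_le (by simp))

theorem totalDegree_sub_C_mul_le {ℓ g : MvPolynomial σ R} {d : ℕ}
    (hℓ : ℓ.IsHomogeneous 1) (c : R) (hg : g.totalDegree ≤ d) :
    ((ℓ - C c) * g).totalDegree ≤ d + 1 := by
  have := hℓ.totalDegree_sub_C_le c
  exact (totalDegree_mul _ _).trans (by omega)

theorem homogeneousComponent_succ_sub_C_mul {ℓ : MvPolynomial σ R}
    (hℓ : ℓ.IsHomogeneous 1) (c : R) (g : MvPolynomial σ R) (d : ℕ) :
    homogeneousComponent (d + 1) ((ℓ - C c) * g) =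
      ℓ * homogeneousComponent d g - C c * homogeneousComponent (d + 1) g := by
  rw [sub_mul, map_sub, hℓ.homogeneousComponent_mul_of_le g (by omega), Nat.add_sub_cancel,
    homogeneousComponent_C_mul]

end CommRing

section Field

variable {k : Type*} [Field k] {Z : Set (σ → k)}

theorem mul_mem_vanishingIdeal_union {A B : Set (σ → k)} {p q : MvPolynomial σ k}
    (hp : p ∈ vanishingIdeal k A) (hq : q ∈ vanishingIdeal k B) :
    p * q ∈ vanishingIdeal k (A ∪ B) := by
  rintro x (hx | hx)
  · rw [map_mul, hp x hx, zero_mul]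
  · rw [map_mul, hq x hx, mul_zero]

def HasVanishingLifts (Z : Set (σ → k)) (f : MvPolynomial σ k) : Prop :=
  ∀ d, ∃ K ∈ vanishingIdeal k Z, K.totalDegree ≤ d ∧
    homogeneousComponent d K = homogeneousComponent d f

namespace HasVanishingLifts

variable {f g : MvPolynomial σ k}

theorem zero : HasVanishingLifts Z 0 := fun _ => ⟨0, zero_mem _, by simp, rfl⟩

theorem add (hf : HasVanishingLifts Z f) (hg : HasVanishingLifts Z g) :
    HasVanishingLifts Z (f + g) := by
  intro d
  obtain ⟨K, hK, hKdeg, hKf⟩ := hf d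
  obtain ⟨L, hL, hLdeg, hLg⟩ := hg d
  exact ⟨K + L, add_mem hK hL, (totalDegree_add _ _).trans (max_le hKdeg hLdeg),
    by rw [map_add, map_add, hKf, hLg]⟩

theorem isHomogeneous_mul {q : MvPolynomial σ k} {i : ℕ} (hq : q.IsHomogeneous i)
    (hf : HasVanishingLifts Z f) : HasVanishingLifts Z (q * f) := by
  intro d
  rcases le_or_gt i d with h | h
  · obtain ⟨K, hK, hKdeg, hKf⟩ := hf (d - i)
    refine ⟨q * K, Ideal.mul_mem_left _ _ hK, (totalDegree_mul _ _).trans ?_, ?_⟩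
    · have := hq.totalDegree_le
      omega
    · rw [hq.homogeneousComponent_mul_of_le _ h, hq.homogeneousComponent_mul_of_le _ h, hKf]
  · exact ⟨0, zero_mem _, by simp, by rw [map_zero, hq.homogeneousComponent_mul_of_lt_s11 _ h]⟩

theorem mul (p : MvPolynomial σ k) (hf : HasVanishingLifts Z f) :
    HasVanishingLifts Z (p * f) := by
  induction p using MvPolynomial.induction_on generalizing f with
  | C a => exact hf.isHomogeneous_mul (isHomogeneous_C σ a)
  | add p q hp hq => rw [add_mul]; exact (hp hf).add (hq hf)
  | mul_X p i hp => rw [mul_assoc]; exact hp (hf.isHomogeneous_mul (isHomogeneous_X k i))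

end HasVanishingLifts

theorem hasVanishingLifts_homogeneousComponent {K : MvPolynomial σ k}
    (hK : K ∈ vanishingIdeal k Z) {e : ℕ} (hdeg : K.totalDegree ≤ e) :
    HasVanishingLifts Z (homogeneousComponent e K) := by
  intro d
  by_cases hd : d = e
  · subst hd
    exact ⟨K, hK, hdeg,
      (homogeneousComponent_eq_self (homogeneousComponent_isHomogeneous _ _)).symm⟩
  · exact ⟨0, zero_mem _, by simp,
      by rw [map_zero, homogeneousComponent_of_mem (homogeneousComponent_mem _ _), if_neg hd]⟩

end Field

end MvPolynomial

section TopIdeal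

attribute [local instance] MvPolynomial.gradedAlgebra

variable {n : ℕ} {Z : Set (Fin n → ℂ)}

theorem hasVanishingLifts_of_mem_topIdeal {f : MvPolynomial (Fin n) ℂ} (hf : f ∈ topIdeal Z) :
    HasVanishingLifts Z f := by
  induction hf using Submodule.span_induction with
  | mem _ h =>
    obtain ⟨K, hK, -, rfl⟩ := h
    exact hasVanishingLifts_homogeneousComponent hK le_rfl
  | zero => exact .zero
  | add _ _ _ _ hf hg => exact hf.add hg
  | smul p _ _ hf => exact hf.mul p

theorem homogeneousComponent_mem_topIdeal_s11 {K : MvPolynomial (Fin n) ℂ}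
    (hK : K ∈ vanishingIdeal ℂ Z) {d : ℕ} (hdeg : K.totalDegree ≤ d) :
    homogeneousComponent d K ∈ topIdeal Z := by
  by_cases h0 : homogeneousComponent d K = 0
  · rw [h0]
    exact zero_mem _
  have hd : K.totalDegree = d :=
    hdeg.antisymm (not_lt.1 fun hlt => h0 (homogeneousComponent_eq_zero _ _ hlt))
  exact Ideal.subset_span ⟨K, hK, fun hK0 => h0 (by simp [hK0]), by rw [topComponent, hd]⟩

theorem homogeneousComponent_mem_topIdeal_of_succ_eq_zero {K : MvPolynomial (Fin n) ℂ}
    (hK : K ∈ vanishingIdeal ℂ Z) {d : ℕ} (hdeg : K.totalDegree ≤ d + 1)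
    (htop : homogeneousComponent (d + 1) K = 0) : homogeneousComponent d K ∈ topIdeal Z :=
  homogeneousComponent_mem_topIdeal_s11 hK
    (totalDegree_le_of_homogeneousComponent_succ_eq_zero hdeg htop)

theorem isHomogeneous_topIdeal :
    (topIdeal Z).IsHomogeneous (homogeneousSubmodule (Fin n) ℂ) :=
  Ideal.homogeneous_span _ _ fun _ ⟨K, _, _, hK⟩ => hK ▸ ⟨_, homogeneousComponent_mem _ K⟩

theorem topIdeal_anti_s11 {A B : Set (Fin n → ℂ)} (h : A ⊆ B) : topIdeal B ≤ topIdeal A :=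
  Ideal.span_mono fun _ ⟨K, hK, hK0, hKg⟩ => ⟨K, vanishingIdeal_anti_mono h hK, hK0, hKg⟩

theorem mem_topIdeal_of_sub_C_mem_vanishingIdeal {ℓ : MvPolynomial (Fin n) ℂ} {a : ℂ}
    (hℓ : ℓ.IsHomogeneous 1) (ha : ℓ - C a ∈ vanishingIdeal ℂ Z) :
    ℓ ∈ topIdeal Z := by
  simpa [homogeneousComponent_eq_self hℓ, homogeneousComponent_of_mem (isHomogeneous_C _ a)]
    using homogeneousComponent_mem_topIdeal_s11 ha (hℓ.totalDegree_sub_C_le a)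

end TopIdeal

section ExactSequence

attribute [local instance] MvPolynomial.gradedAlgebra

variable {n : ℕ} {ℓ : MvPolynomial (Fin n) ℂ} {a b : ℂ} {A B : Set (Fin n → ℂ)}

theorem homogeneousComponent_mem_topIdeal_of_mul_mem (hℓ : ℓ.IsHomogeneous 1)
    (ha : ℓ - C a ∈ vanishingIdeal ℂ A) (hb : ℓ - C b ∈ vanishingIdeal ℂ B)
    (hab : a ≠ b) (hAB : topIdeal A ≤ topIdeal B) {f : MvPolynomial (Fin n) ℂ}
    (hf : ℓ * f ∈ topIdeal (A ∪ B)) (d : ℕ) : homogeneousComponent d f ∈ topIdeal B := by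
  obtain ⟨K, hK, hKdeg, hKtop⟩ := hasVanishingLifts_of_mem_topIdeal hf (d + 1)
  set g := homogeneousComponent d f
  have hg : g.IsHomogeneous d := homogeneousComponent_isHomogeneous d f
  rw [hℓ.homogeneousComponent_mul_of_le f (by omega), Nat.add_sub_cancel] at hKtop
  have key {c : ℂ} {Z : Set (Fin n → ℂ)} (hZ : Z ⊆ A ∪ B)
      (hc : ℓ - C c ∈ vanishingIdeal ℂ Z) :
      homogeneousComponent d K + C c * g ∈ topIdeal Z := by
    have hN : K - (ℓ - C c) * g ∈ vanishingIdeal ℂ Z :=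
      sub_mem (vanishingIdeal_anti_mono hZ hK) (Ideal.mul_mem_right _ _ hc)
    have := homogeneousComponent_mem_topIdeal_of_succ_eq_zero hN
      ((totalDegree_sub _ _).trans
        (max_le hKdeg (totalDegree_sub_C_mul_le hℓ c hg.totalDegree_le)))
      (by rw [map_sub, homogeneousComponent_succ_sub_C_mul hℓ, hKtop,
        homogeneousComponent_eq_self hg, homogeneousComponent_of_mem hg, if_neg (by omega)]; ring)
    rw [map_sub, sub_mul, map_sub, homogeneousComponent_C_mul, homogeneousComponent_eq_self hg,
      homogeneousComponent_of_mem (hℓ.mul hg), if_neg (by omega)] at this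
    convert this using 1
    ring
  have hdiff : C (a - b) * g ∈ topIdeal B := by
    convert sub_mem (hAB (key Set.subset_union_left ha)) (key Set.subset_union_right hb) using 1
    rw [map_sub]
    ring
  exact (Ideal.unit_mul_mem_iff_mem _ ((isUnit_iff_ne_zero.2 (sub_ne_zero.2 hab)).map C)).1 hdiff

theorem mem_topIdeal_of_mul_mem_topIdeal_union (hℓ : ℓ.IsHomogeneous 1)
    (ha : ℓ - C a ∈ vanishingIdeal ℂ A) (hb : ℓ - C b ∈ vanishingIdeal ℂ B)
    (hab : a ≠ b) (hAB : topIdeal A ≤ topIdeal B) {f : MvPolynomial (Fin n) ℂ}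
    (hf : ℓ * f ∈ topIdeal (A ∪ B)) : f ∈ topIdeal B :=
  (mem_iff_homogeneousComponent_mem isHomogeneous_topIdeal f).2
    (homogeneousComponent_mem_topIdeal_of_mul_mem hℓ ha hb hab hAB hf)

theorem homogeneousComponent_mem_span_sup_topIdeal_union (hℓ : ℓ.IsHomogeneous 1)
    (ha : ℓ - C a ∈ vanishingIdeal ℂ A) (hb : ℓ - C b ∈ vanishingIdeal ℂ B)
    (hab : a ≠ b)
    {f : MvPolynomial (Fin n) ℂ} (hfA : f ∈ topIdeal A) (hfB : f ∈ topIdeal B) (d : ℕ) :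
    homogeneousComponent d f ∈ Ideal.span {ℓ} ⊔ topIdeal (A ∪ B) := by
  obtain ⟨h, hh, hhdeg, hhf⟩ := hasVanishingLifts_of_mem_topIdeal hfA d
  obtain ⟨k, hk, hkdeg, hkf⟩ := hasVanishingLifts_of_mem_topIdeal hfB d
  set M := (ℓ - C b) * h - (ℓ - C a) * k
  have hM : M ∈ vanishingIdeal ℂ (A ∪ B) :=
    sub_mem (mul_comm h _ ▸ mul_mem_vanishingIdeal_union hh hb)
      (mul_mem_vanishingIdeal_union ha hk)
  have hMdeg : M.totalDegree ≤ d + 1 := (totalDegree_sub _ _).trans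
    (max_le (totalDegree_sub_C_mul_le hℓ b hhdeg) (totalDegree_sub_C_mul_le hℓ a hkdeg))
  have hMtop : homogeneousComponent (d + 1) M = 0 := by
    rw [map_sub, homogeneousComponent_succ_sub_C_mul hℓ, homogeneousComponent_succ_sub_C_mul hℓ,
      hhf, hkf, homogeneousComponent_eq_zero _ h (by omega),
      homogeneousComponent_eq_zero _ k (by omega)]
    ring
  have hMd : homogeneousComponent d M =
      homogeneousComponent d (ℓ * (h - k)) + C (a - b) * homogeneousComponent d f := by
    simp only [M, sub_mul, mul_sub, map_sub, homogeneousComponent_C_mul, hhf, hkf]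
    ring
  have hCf : C (a - b) * homogeneousComponent d f ∈ Ideal.span {ℓ} ⊔ topIdeal (A ∪ B) := by
    rw [← add_sub_cancel_left (homogeneousComponent d (ℓ * (h - k))) (C (a - b) * _), ← hMd]
    exact sub_mem
      (Ideal.mem_sup_right (homogeneousComponent_mem_topIdeal_of_succ_eq_zero hM hMdeg hMtop))
      (Ideal.mem_sup_left (hℓ.homogeneousComponent_mul_mem_span_singleton _ d))
  exact (Ideal.unit_mul_mem_iff_mem _ ((isUnit_iff_ne_zero.2 (sub_ne_zero.2 hab)).map C)).1 hCf

theorem topIdeal_eq_span_sup_topIdeal_union (hℓ : ℓ.IsHomogeneous 1)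
    (ha : ℓ - C a ∈ vanishingIdeal ℂ A) (hb : ℓ - C b ∈ vanishingIdeal ℂ B)
    (hab : a ≠ b) (hAB : topIdeal A ≤ topIdeal B) :
    topIdeal A = Ideal.span {ℓ} ⊔ topIdeal (A ∪ B) := by
  refine le_antisymm (fun f hf => ?_) (sup_le ?_ (topIdeal_anti_s11 Set.subset_union_left))
  · have hhom :
        (Ideal.span {ℓ} ⊔ topIdeal (A ∪ B)).IsHomogeneous (homogeneousSubmodule _ ℂ) :=
      (Ideal.homogeneous_span _ _ fun _ hx => ⟨1, (Set.mem_singleton_iff.1 hx) ▸ hℓ⟩).sup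
        isHomogeneous_topIdeal
    exact (mem_iff_homogeneousComponent_mem hhom f).2
      (homogeneousComponent_mem_span_sup_topIdeal_union hℓ ha hb hab hf (hAB hf))
  · rw [Ideal.span_le, Set.singleton_subset_iff]
    exact mem_topIdeal_of_sub_C_mem_vanishingIdeal hℓ ha

end ExactSequence

theorem sum_X_sub_C_mem_vanishingIdeal_permOrbit {n : ℕ} (P : Fin n → ℂ) :
    ∑ i, X i - C (∑ i, P i) ∈ vanishingIdeal ℂ (permOrbit P) := by
  rintro _ ⟨τ, rfl⟩
  simp [Equiv.sum_comp τ P]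

/-- Exactness, elementwise: the first conjunct is injectivity of multiplication by
`s = x₁+⋯+xₙ`, the second is exactness in the middle, the third is surjectivity. -/
theorem exact_sequence {n : ℕ} (P Q : Fin n → ℂ)
    (hPQ : topIdeal (permOrbit P) ≤ topIdeal (permOrbit Q))
    (hsum : ∑ i, P i ≠ ∑ i, Q i) :
    (∀ f : MvPolynomial (Fin n) ℂ,
        (∑ i : Fin n, (X i : MvPolynomial (Fin n) ℂ)) * f ∈
            topIdeal (permOrbit P ∪ permOrbit Q) →
          f ∈ topIdeal (permOrbit Q)) ∧
      (∀ f : MvPolynomial (Fin n) ℂ,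
        f ∈ topIdeal (permOrbit P) ↔
          ∃ g : MvPolynomial (Fin n) ℂ,
            f - (∑ i : Fin n, (X i : MvPolynomial (Fin n) ℂ)) * g ∈
              topIdeal (permOrbit P ∪ permOrbit Q)) ∧
      (∀ a : MvPolynomial (Fin n) ℂ ⧸ topIdeal (permOrbit P),
        ∃ f : MvPolynomial (Fin n) ℂ, Ideal.Quotient.mk (topIdeal (permOrbit P)) f = a) := by
  have hs : (∑ i : Fin n, (X i : MvPolynomial (Fin n) ℂ)).IsHomogeneous 1 :=
    IsHomogeneous.sum _ _ _ fun i _ => isHomogeneous_X ℂ i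
  have hP := sum_X_sub_C_mem_vanishingIdeal_permOrbit P
  have hQ := sum_X_sub_C_mem_vanishingIdeal_permOrbit Q
  refine ⟨fun f => mem_topIdeal_of_mul_mem_topIdeal_union hs hP hQ hsum hPQ, fun f => ?_,
    Ideal.Quotient.mk_surjective⟩
  rw [topIdeal_eq_span_sup_topIdeal_union hs hP hQ hsum hPQ, Ideal.mem_span_singleton_sup]
  constructor
  · rintro ⟨g, r, hr, rfl⟩
    exact ⟨g, by rwa [mul_comm, add_sub_cancel_left]⟩
  · rintro ⟨g, hg⟩
    exact ⟨g, _, hg, by ring⟩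
end
end
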